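/- Let φ(s₁,…,s_{n+1}) ∈ T_{n+1} have representation ∫(e^{s·u}−1)dν(u) with finite limit ∂φ/∂s_{n+1}|_{s=0⁻}. If φ arises as the divided difference of some ψ ∈ T_n (φ = φ_i of Lemma 1) and ∂²ψ/∂s_i²|_{s=0⁻} is finite, then ∂φ_i/∂s_{n+1}|_{s=0⁻} = (1/2) ∂²ψ/∂s_i²|_{s=0⁻}. -/

import Mathlib

open MeasureTheory Filter Set

/-- Coordinate partial derivative of a function of `n` real variables. -/
noncomputable def pd {n : ℕ} (i : Fin n) (f : (Fin n → ℝ) → ℝ) : (Fin n → ℝ) → ℝ :=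
  fun s => fderiv ℝ f s (Pi.single i 1)

/-- Iterated coordinate partial derivatives along a list of directions. -/
noncomputable def iterPD {n : ℕ} : List (Fin n) → ((Fin n → ℝ) → ℝ) → ((Fin n → ℝ) → ℝ)
  | [], f => f
  | i :: l, f => pd i (iterPD l f)

/-- The open negative orthant `(-∞,0)^n`. -/
def negOrth (n : ℕ) : Set (Fin n → ℝ) := {s | ∀ j, s j < 0}

/-- `f` is absolutely monotone on `(-∞,0)^n`: `f` and all of its partial
derivatives of every order are nonnegative there. -/
def AbsMono {n : ℕ} (f : (Fin n → ℝ) → ℝ) : Prop :=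
  ∀ l : List (Fin n), ∀ s ∈ negOrth n, 0 ≤ iterPD l f s

/-- The class `T_n` of nonpositive Bernstein functions of `n` variables:
nonpositive `C^∞` functions on `(-∞,0)^n` all of whose first partial
derivatives are absolutely monotone. -/
def InT {n : ℕ} (ψ : (Fin n → ℝ) → ℝ) : Prop :=
  ContDiffOn ℝ (⊤ : ℕ∞) ψ (negOrth n) ∧ (∀ s ∈ negOrth n, ψ s ≤ 0) ∧ ∀ i, AbsMono (pd i ψ)


/-- The set `ℝ₊ⁿ \ {0}`. -/
def posSupp (n : ℕ) : Set (Fin n → ℝ) := {v | (∀ j, 0 ≤ v j) ∧ v ≠ 0}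

/-- The divided difference `φ_i` of `ψ` in the `i`-th variable, minus `ω`. -/
noncomputable def divDiff {n : ℕ} (ψ : (Fin n → ℝ) → ℝ) (i : Fin n) (ω : ℝ) :
    (Fin (n + 1) → ℝ) → ℝ := fun t =>
  (if t i.castSucc = t (Fin.last n) then pd i ψ (fun j => t j.castSucc)
   else (ψ (fun j => t j.castSucc) -
      ψ (Function.update (fun j => t j.castSucc) i (t (Fin.last n)))) /
        (t i.castSucc - t (Fin.last n))) - ω

lemma negOrth_isOpen (n : ℕ) : IsOpen (negOrth n) := by
  have h : negOrth n = ⋂ j, {s : Fin n → ℝ | s j < 0} := by ext s; simp [negOrth]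
  rw [h]
  exact isOpen_iInter_of_finite fun j => isOpen_lt (continuous_apply j) continuous_const

noncomputable def projR (n : ℕ) (k : Fin n) : (Fin n → ℝ) →L[ℝ] ℝ :=
  ContinuousLinearMap.proj k

noncomputable def LA (n : ℕ) (i : Fin n) : (Fin (n+1) → ℝ) →L[ℝ] (Fin n → ℝ) :=
  ContinuousLinearMap.pi fun j =>
    if j = i then projR (n+1) (Fin.last n) else projR (n+1) j.castSucc

noncomputable def LB (n : ℕ) (i : Fin n) : (Fin (n+1) → ℝ) →L[ℝ] (Fin n → ℝ) :=
  ContinuousLinearMap.pi fun j =>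
    if j = i then projR (n+1) i.castSucc - projR (n+1) (Fin.last n) else 0

noncomputable def Lmap (n : ℕ) (i : Fin n) (θ : ℝ) : (Fin (n+1) → ℝ) →L[ℝ] (Fin n → ℝ) :=
  LA n i + θ • LB n i

lemma Lmap_apply {n : ℕ} (i : Fin n) (θ : ℝ) (t : Fin (n+1) → ℝ) (j : Fin n) :
    Lmap n i θ t j = if j = i then
      t (Fin.last n) + θ * (t i.castSucc - t (Fin.last n)) else t j.castSucc := by
  by_cases h : j = i <;>
    simp [Lmap, LA, LB, projR, h, ContinuousLinearMap.pi_apply, mul_comm]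

lemma Lmap_eq_update {n : ℕ} (i : Fin n) (θ : ℝ) (t : Fin (n+1) → ℝ) :
    Lmap n i θ t = Function.update (fun j => t j.castSucc) i
      (t (Fin.last n) + θ * (t i.castSucc - t (Fin.last n))) := by
  funext j
  rcases eq_or_ne j i with h | h <;> simp [Lmap_apply, Function.update_apply, h]

lemma Lmap_mem {n : ℕ} (i : Fin n) {θ : ℝ} (hθ : θ ∈ Icc (0:ℝ) 1) {t : Fin (n+1) → ℝ}
    (ht : t ∈ negOrth (n+1)) : Lmap n i θ t ∈ negOrth n := by
  intro j
  rw [Lmap_apply]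
  split
  · have h1 := ht i.castSucc
    have h2 := ht (Fin.last n)
    nlinarith [hθ.1, hθ.2, mul_nonneg hθ.1 (by linarith : (0:ℝ) ≤ -t i.castSucc),
      mul_nonneg (by linarith [hθ.2] : (0:ℝ) ≤ 1 - θ) (by linarith : (0:ℝ) ≤ -t (Fin.last n))]
  · exact ht j.castSucc

lemma Lmap_norm_le {n : ℕ} (i : Fin n) {θ : ℝ} (hθ : θ ∈ Icc (0:ℝ) 1) (t : Fin (n+1) → ℝ) :
    ‖Lmap n i θ t‖ ≤ ‖t‖ := by
  rw [pi_norm_le_iff_of_nonneg (norm_nonneg t)]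
  intro j
  rw [Real.norm_eq_abs, Lmap_apply, abs_le]
  have hb := abs_le.mp ((Real.norm_eq_abs _ ▸ norm_le_pi_norm t (Fin.last n) : |t (Fin.last n)| ≤ ‖t‖))
  have ha := abs_le.mp ((Real.norm_eq_abs _ ▸ norm_le_pi_norm t i.castSucc : |t i.castSucc| ≤ ‖t‖))
  have hj := abs_le.mp ((Real.norm_eq_abs _ ▸ norm_le_pi_norm t j.castSucc : |t j.castSucc| ≤ ‖t‖))
  split
  · constructor <;>
      nlinarith [hθ.1, hθ.2, mul_nonneg hθ.1 (by linarith [ha.2] : (0:ℝ) ≤ ‖t‖ - t i.castSucc),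
        mul_nonneg hθ.1 (by linarith [ha.1] : (0:ℝ) ≤ t i.castSucc + ‖t‖),
        mul_nonneg (by linarith [hθ.2] : (0:ℝ) ≤ 1 - θ) (by linarith [hb.2] : (0:ℝ) ≤ ‖t‖ - t (Fin.last n)),
        mul_nonneg (by linarith [hθ.2] : (0:ℝ) ≤ 1 - θ) (by linarith [hb.1] : (0:ℝ) ≤ t (Fin.last n) + ‖t‖)]
  · exact hj

lemma Lmap_opNorm_le {n : ℕ} (i : Fin n) {θ : ℝ} (hθ : θ ∈ Icc (0:ℝ) 1) :
    ‖Lmap n i θ‖ ≤ 1 :=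
  ContinuousLinearMap.opNorm_le_bound _ zero_le_one fun t => by
    rw [one_mul]; exact Lmap_norm_le i hθ t

lemma Lmap_single {n : ℕ} (i : Fin n) (θ : ℝ) :
    Lmap n i θ (Pi.single (Fin.last n) 1) = (1 - θ) • (Pi.single i 1 : Fin n → ℝ) := by
  funext j
  rcases eq_or_ne j i with h | h <;>
    simp [Lmap_apply, h, Pi.single_apply, (Fin.castSucc_lt_last _).ne] <;> ring

lemma pd_contDiffOn {n : ℕ} (i : Fin n) {f : (Fin n → ℝ) → ℝ}
    (hf : ContDiffOn ℝ (⊤ : ℕ∞) f (negOrth n)) : ContDiffOn ℝ (⊤ : ℕ∞) (pd i f) (negOrth n) := by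
  have h1 : ContDiffOn ℝ (⊤ : ℕ∞) (fderiv ℝ f) (negOrth n) :=
    hf.fderiv_of_isOpen (negOrth_isOpen n) (by simp)
  exact (ContinuousLinearMap.apply ℝ ℝ (Pi.single i 1)).contDiff.comp_contDiffOn h1

lemma hasDerivAt_comp_update {n : ℕ} {f : (Fin n → ℝ) → ℝ}
    (hf : ContDiffOn ℝ (⊤ : ℕ∞) f (negOrth n)) (i : Fin n) {s : Fin n → ℝ} {u : ℝ}
    (hmem : Function.update s i u ∈ negOrth n) :
    HasDerivAt (fun v => f (Function.update s i v)) (pd i f (Function.update s i u)) u := by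
  have hfd : DifferentiableAt ℝ f (Function.update s i u) :=
    (hf.differentiableOn (by simp)).differentiableAt ((negOrth_isOpen n).mem_nhds hmem)
  have hinner : HasDerivAt (fun v : ℝ => Function.update s i v)
      (Pi.single i 1 : Fin n → ℝ) u := hasDerivAt_update s i u
  exact hfd.hasFDerivAt.comp_hasDerivAt u hinner

lemma continuous_Lmap_apply {n : ℕ} (i : Fin n) (x : Fin (n+1) → ℝ) :
    Continuous fun θ : ℝ => Lmap n i θ x := by
  have h : (fun θ : ℝ => Lmap n i θ x) = fun θ => LA n i x + θ • LB n i x := by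
    funext θ; simp [Lmap]
  rw [h]
  exact continuous_const.add (continuous_id.smul continuous_const)

lemma continuous_Lmap {n : ℕ} (i : Fin n) :
    Continuous fun θ : ℝ => Lmap n i θ := by
  have h : (fun θ : ℝ => Lmap n i θ) = fun θ => LA n i + θ • LB n i := rfl
  rw [h]
  exact continuous_const.add (continuous_id.smul continuous_const)

lemma divDiff_eq_integral {n : ℕ} {ψ : (Fin n → ℝ) → ℝ}
    (hψ : ContDiffOn ℝ (⊤ : ℕ∞) ψ (negOrth n)) (i : Fin n) (ω : ℝ)
    {x : Fin (n+1) → ℝ} (hx : x ∈ negOrth (n+1)) :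
    divDiff ψ i ω x = (∫ θ in Ioc (0:ℝ) 1, pd i ψ (Lmap n i θ x)) - ω := by
  have hseg : ∀ θ ∈ Icc (0:ℝ) 1, Lmap n i θ x ∈ negOrth n := fun θ hθ => Lmap_mem i hθ hx
  by_cases hab : x i.castSucc = x (Fin.last n)
  · have hLm : ∀ θ : ℝ, Lmap n i θ x = fun j => x j.castSucc := by
      intro θ
      rw [Lmap_eq_update, ← hab]
      have h2 : x i.castSucc + θ * (x i.castSucc - x i.castSucc) = x i.castSucc := by ring
      rw [h2]
      exact Function.update_eq_self i _
    rw [divDiff, if_pos hab]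
    congr 1
    simp_rw [hLm]
    simp [Real.volume_Ioc]
  · have hanz : x i.castSucc - x (Fin.last n) ≠ 0 := sub_ne_zero.mpr hab
    have hder : ∀ θ ∈ uIcc (0:ℝ) 1,
        HasDerivAt (fun θ : ℝ => ψ (Lmap n i θ x))
          ((x i.castSucc - x (Fin.last n)) * pd i ψ (Lmap n i θ x)) θ := by
      intro θ hθ
      rw [uIcc_of_le zero_le_one] at hθ
      have hmem : Function.update (fun j => x j.castSucc) i
          (x (Fin.last n) + θ * (x i.castSucc - x (Fin.last n))) ∈ negOrth n := by
        rw [← Lmap_eq_update]; exact hseg θ hθ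
      have h1 := hasDerivAt_comp_update hψ i hmem
      have h2 : HasDerivAt (fun θ : ℝ => x (Fin.last n) + θ * (x i.castSucc - x (Fin.last n)))
          (x i.castSucc - x (Fin.last n)) θ := by
        simpa using ((hasDerivAt_id θ).mul_const
          (x i.castSucc - x (Fin.last n))).const_add (x (Fin.last n))
      have h3 := h1.comp θ h2
      have hGeq : (fun θ : ℝ => ψ (Function.update (fun j => x j.castSucc) i
          (x (Fin.last n) + θ * (x i.castSucc - x (Fin.last n)))))
          = fun θ : ℝ => ψ (Lmap n i θ x) := by
        funext θ'; rw [Lmap_eq_update]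
      simp only [Function.comp_def] at h3
      rw [hGeq, ← Lmap_eq_update] at h3
      simpa [mul_comm] using h3
    have hcont : ContinuousOn (fun θ : ℝ =>
        (x i.castSucc - x (Fin.last n)) * pd i ψ (Lmap n i θ x)) (uIcc (0:ℝ) 1) := by
      apply continuousOn_const.mul
      apply ((pd_contDiffOn i hψ).continuousOn).comp
        (continuous_Lmap_apply i x).continuousOn
      intro θ hθ
      rw [uIcc_of_le zero_le_one] at hθ
      exact hseg θ hθ
    have hFTC := intervalIntegral.integral_eq_sub_of_hasDerivAt hder hcont.intervalIntegrable
    have h1x : Lmap n i 1 x = fun j => x j.castSucc := by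
      rw [Lmap_eq_update]
      have h2 : x (Fin.last n) + 1 * (x i.castSucc - x (Fin.last n)) = x i.castSucc := by ring
      rw [h2]
      exact Function.update_eq_self i _
    have h0x : Lmap n i 0 x = Function.update (fun j => x j.castSucc) i (x (Fin.last n)) := by
      rw [Lmap_eq_update]; norm_num
    rw [h1x, h0x, intervalIntegral.integral_const_mul] at hFTC
    rw [divDiff, if_neg hab]
    rw [← intervalIntegral.integral_of_le zero_le_one]
    congr 1
    field_simp
    linarith [hFTC]

lemma pd_last_divDiff {n : ℕ} {ψ : (Fin n → ℝ) → ℝ}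
    (hψ : ContDiffOn ℝ (⊤ : ℕ∞) ψ (negOrth n)) (i : Fin n) (ω : ℝ)
    {t : Fin (n+1) → ℝ} (ht : t ∈ negOrth (n+1)) :
    pd (Fin.last n) (divDiff ψ i ω) t
      = ∫ θ in Ioc (0:ℝ) 1, (1 - θ) * pd i (pd i ψ) (Lmap n i θ t) := by
  classical
  set P := pd i ψ with hPdef
  have hP : ContDiffOn ℝ (⊤ : ℕ∞) P (negOrth n) := pd_contDiffOn i hψ
  set μ : Measure ℝ := volume.restrict (Ioc (0:ℝ) 1) with hμdef
  -- choose a radius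
  have hune : (Finset.univ : Finset (Fin (n+1))).Nonempty := Finset.univ_nonempty
  obtain ⟨j₀, -, hj₀⟩ := Finset.exists_mem_eq_sup' hune t
  set ρ : ℝ := -(Finset.univ.sup' hune t) with hρdef
  have hρpos : 0 < ρ := by
    rw [hρdef, hj₀]; exact neg_pos.mpr (ht j₀)
  have htle : ∀ j, t j ≤ -ρ := fun j => by
    rw [hρdef, neg_neg]; exact Finset.le_sup' t (Finset.mem_univ j)
  have hrpos : (0:ℝ) < ρ/2 := by linarith
  -- coordinates of points in the ball
  have hxcoord : ∀ x ∈ Metric.ball t (ρ/2), ∀ k, x k ∈ Icc (-(‖t‖ + ρ)) (-(ρ/2)) := by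
    intro x hx k
    have h1 : |x k - t k| < ρ/2 := by
      calc |x k - t k| = dist (x k) (t k) := by rw [Real.dist_eq]
        _ ≤ dist x t := dist_le_pi_dist x t k
        _ < ρ/2 := hx
    have h2 : |t k| ≤ ‖t‖ := by
      rw [← Real.norm_eq_abs]; exact norm_le_pi_norm t k
    have h2' := abs_le.mp h2
    have h1' := abs_le.mp h1.le
    exact ⟨by linarith [htle k], by linarith [htle k]⟩
  -- the compact set
  set K : Set (Fin n → ℝ) := Set.pi univ (fun _ => Icc (-(‖t‖ + ρ)) (-(ρ/2))) with hKdef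
  have hKc : IsCompact K := isCompact_univ_pi fun _ => isCompact_Icc
  have hKneg : K ⊆ negOrth n := fun s hs j =>
    lt_of_le_of_lt (hs j (mem_univ j)).2 (by linarith)
  have hKne : K.Nonempty :=
    ⟨fun _ => -(ρ/2), fun j _ => ⟨by nlinarith [norm_nonneg t], le_refl _⟩⟩
  have hmemK : ∀ x ∈ Metric.ball t (ρ/2), ∀ θ ∈ Icc (0:ℝ) 1, Lmap n i θ x ∈ K := by
    intro x hx θ hθ
    intro j _
    have hxa := hxcoord x hx i.castSucc
    have hxb := hxcoord x hx (Fin.last n)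
    have hxj := hxcoord x hx j.castSucc
    rw [Lmap_apply]
    split
    · constructor <;>
        nlinarith [hθ.1, hθ.2, hxa.1, hxa.2, hxb.1, hxb.2,
          mul_nonneg hθ.1 (by linarith [hxa.1] : (0:ℝ) ≤ x i.castSucc + (‖t‖ + ρ)),
          mul_nonneg hθ.1 (by linarith [hxa.2] : (0:ℝ) ≤ -(ρ/2) - x i.castSucc),
          mul_nonneg (by linarith [hθ.2] : (0:ℝ) ≤ 1 - θ)
            (by linarith [hxb.1] : (0:ℝ) ≤ x (Fin.last n) + (‖t‖ + ρ)),
          mul_nonneg (by linarith [hθ.2] : (0:ℝ) ≤ 1 - θ)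
            (by linarith [hxb.2] : (0:ℝ) ≤ -(ρ/2) - x (Fin.last n))]
    · exact hxj
  -- the bound
  have hfd_cont : ContinuousOn (fun s => fderiv ℝ P s) (negOrth n) :=
    hP.continuousOn_fderiv_of_isOpen (negOrth_isOpen n) (by simp)
  obtain ⟨s₀, hs₀K, hs₀⟩ := hKc.exists_isMaxOn hKne ((hfd_cont.mono hKneg).norm)
  rw [isMaxOn_iff] at hs₀
  set M : ℝ := ‖fderiv ℝ P s₀‖ with hMdef
  -- the derivative candidate
  set F' : (Fin (n+1) → ℝ) → ℝ → (Fin (n+1) → ℝ) →L[ℝ] ℝ :=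
    fun x θ => (fderiv ℝ P (Lmap n i θ x)).comp (Lmap n i θ) with hF'def
  have hbound_pt : ∀ θ ∈ Ioc (0:ℝ) 1, ∀ x ∈ Metric.ball t (ρ/2), ‖F' x θ‖ ≤ M := by
    intro θ hθ x hx
    calc ‖F' x θ‖ ≤ ‖fderiv ℝ P (Lmap n i θ x)‖ * ‖Lmap n i θ‖ :=
          ContinuousLinearMap.opNorm_comp_le _ _
      _ ≤ M * 1 := mul_le_mul (hs₀ _ (hmemK x hx θ (Ioc_subset_Icc_self hθ)))
          (Lmap_opNorm_le i (Ioc_subset_Icc_self hθ)) (norm_nonneg _) (norm_nonneg _)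
      _ = M := mul_one M
  have hF_meas : ∀ᶠ x in nhds t, AEStronglyMeasurable (fun θ => P (Lmap n i θ x)) μ := by
    filter_upwards [Metric.ball_mem_nhds t hrpos] with x hx
    refine ContinuousOn.aestronglyMeasurable ?_ measurableSet_Ioc
    refine hP.continuousOn.comp (continuous_Lmap_apply i x).continuousOn ?_
    exact fun θ hθ => hKneg (hmemK x hx θ (Ioc_subset_Icc_self hθ))
  have hF_int : Integrable (fun θ => P (Lmap n i θ t)) μ := by
    have hco : ContinuousOn (fun θ => P (Lmap n i θ t)) (Icc (0:ℝ) 1) := by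
      refine hP.continuousOn.comp (continuous_Lmap_apply i t).continuousOn ?_
      exact fun θ hθ => hKneg (hmemK t (Metric.mem_ball_self hrpos) θ hθ)
    exact (hco.integrableOn_Icc).mono_set Ioc_subset_Icc_self
  have hF'_meas : AEStronglyMeasurable (F' t) μ := by
    refine ContinuousOn.aestronglyMeasurable ?_ measurableSet_Ioc
    refine ContinuousOn.clm_comp ?_ (continuous_Lmap i).continuousOn
    refine hfd_cont.comp (continuous_Lmap_apply i t).continuousOn ?_
    exact fun θ hθ => hKneg (hmemK t (Metric.mem_ball_self hrpos) θ (Ioc_subset_Icc_self hθ))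
  have h_bound : ∀ᵐ θ ∂μ, ∀ x ∈ Metric.ball t (ρ/2), ‖F' x θ‖ ≤ M := by
    filter_upwards [ae_restrict_mem measurableSet_Ioc] with θ hθ
    exact hbound_pt θ hθ
  have hMint : Integrable (fun _ : ℝ => M) μ := by
    refine (integrableOn_const_iff (C := M)).mpr (Or.inr ?_)
    simp [Real.volume_Ioc]
  have h_diff : ∀ᵐ θ ∂μ, ∀ x ∈ Metric.ball t (ρ/2),
      HasFDerivAt (fun x => P (Lmap n i θ x)) (F' x θ) x := by
    filter_upwards [ae_restrict_mem measurableSet_Ioc] with θ hθ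
    intro x hx
    have hmem : Lmap n i θ x ∈ negOrth n := hKneg (hmemK x hx θ (Ioc_subset_Icc_self hθ))
    have hPd : DifferentiableAt ℝ P (Lmap n i θ x) :=
      (hP.differentiableOn (by simp)).differentiableAt ((negOrth_isOpen n).mem_nhds hmem)
    exact hPd.hasFDerivAt.comp x (Lmap n i θ).hasFDerivAt
  have hmain : HasFDerivAt (fun x => ∫ θ, P (Lmap n i θ x) ∂μ) (∫ θ, F' t θ ∂μ) t :=
    hasFDerivAt_integral_of_dominated_of_fderiv_le (Metric.ball_mem_nhds t hrpos) hF_meas hF_int hF'_meas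
      h_bound hMint h_diff
  have hF'int : Integrable (F' t) μ := by
    refine hMint.mono' hF'_meas ?_
    filter_upwards [ae_restrict_mem measurableSet_Ioc] with θ hθ
    exact hbound_pt θ hθ t (Metric.mem_ball_self hrpos)
  have hev : divDiff ψ i ω =ᶠ[nhds t]
      fun x => (∫ θ, P (Lmap n i θ x) ∂μ) - ω :=
    eventually_of_mem ((negOrth_isOpen (n+1)).mem_nhds ht)
      (fun x hx => divDiff_eq_integral hψ i ω hx)
  have : pd (Fin.last n) (divDiff ψ i ω) t
      = fderiv ℝ (fun x => (∫ θ, P (Lmap n i θ x) ∂μ) - ω) t (Pi.single (Fin.last n) 1) := by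
    rw [show pd (Fin.last n) (divDiff ψ i ω) t
      = fderiv ℝ (divDiff ψ i ω) t (Pi.single (Fin.last n) 1) from rfl, hev.fderiv_eq]
  rw [this, fderiv_sub_const, hmain.fderiv,
    ContinuousLinearMap.integral_apply hF'int]
  refine integral_congr_ae (Eventually.of_forall fun θ => ?_)
  show (fderiv ℝ P (Lmap n i θ t)).comp (Lmap n i θ) (Pi.single (Fin.last n) 1)
    = (1 - θ) * pd i P (Lmap n i θ t)
  rw [ContinuousLinearMap.comp_apply, Lmap_single, ContinuousLinearMap.map_smul,
    smul_eq_mul]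
  rfl

lemma integral_onesub_const (k : ℝ) : ∫ θ in Ioc (0:ℝ) 1, (1 - θ) * k = k / 2 := by
  rw [← intervalIntegral.integral_of_le zero_le_one, intervalIntegral.integral_mul_const]
  have h : ∫ θ in (0:ℝ)..1, (1 - θ) = 1/2 := by
    rw [intervalIntegral.integral_sub intervalIntegrable_const intervalIntegral.intervalIntegrable_id]
    simp [integral_id]
    norm_num
  rw [h]; ring

/-- if `ψ ∈ T_n` has divided difference `φ_i ∈ T_{n+1}` and
`∂²ψ/∂s_i²` has a finite limit `c` at `0⁻`, then
`∂φ_i/∂s_{n+1}|_{s=0⁻} = c/2`. -/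
theorem divDiff_last_partial_limit
    {n : ℕ} (ψ : (Fin n → ℝ) → ℝ) (hψ : InT ψ)
    (μ : Measure (Fin n → ℝ)) (hsupp : μ (posSupp n)ᶜ = 0)
    (hrep : ∀ s ∈ negOrth n, ψ s = ∫ v, (Real.exp (∑ j, s j * v j) - 1) ∂μ)
    (i : Fin n) (ω : ℝ)
    (hω : Tendsto (pd i ψ) (nhdsWithin 0 (negOrth n)) (nhds ω))
    (c : ℝ)
    (hc : Tendsto (pd i (pd i ψ)) (nhdsWithin 0 (negOrth n)) (nhds c)) :
    Tendsto (pd (Fin.last n) (divDiff ψ i ω))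
      (nhdsWithin 0 (negOrth (n + 1))) (nhds (c / 2)) := by
  rw [Metric.tendsto_nhdsWithin_nhds]
  intro ε hε
  obtain ⟨δ, hδpos, hδ⟩ := Metric.tendsto_nhdsWithin_nhds.mp hc (ε/2) (by linarith)
  refine ⟨δ, hδpos, ?_⟩
  intro t htmem htd
  have hkey := pd_last_divDiff hψ.1 i ω htmem
  have hQ : ∀ θ ∈ Ioc (0:ℝ) 1, |pd i (pd i ψ) (Lmap n i θ t) - c| ≤ ε/2 := by
    intro θ hθ
    have hmem : Lmap n i θ t ∈ negOrth n := Lmap_mem i (Ioc_subset_Icc_self hθ) htmem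
    have hd : dist (Lmap n i θ t) 0 < δ := by
      rw [dist_zero_right]
      calc ‖Lmap n i θ t‖ ≤ ‖t‖ := Lmap_norm_le i (Ioc_subset_Icc_self hθ) t
        _ < δ := by rwa [dist_zero_right] at htd
    have h2 := hδ hmem hd
    rw [Real.dist_eq] at h2
    exact h2.le
  have hint : IntegrableOn (fun θ => (1 - θ) * pd i (pd i ψ) (Lmap n i θ t))
      (Ioc (0:ℝ) 1) volume := by
    have hco : ContinuousOn (fun θ : ℝ => (1 - θ) * pd i (pd i ψ) (Lmap n i θ t))
        (Icc (0:ℝ) 1) := by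
      refine (continuous_const.sub continuous_id).continuousOn.mul ?_
      refine ((pd_contDiffOn i (pd_contDiffOn i hψ.1)).continuousOn).comp
        (continuous_Lmap_apply i t).continuousOn ?_
      exact fun θ hθ => Lmap_mem i hθ htmem
    exact (hco.integrableOn_Icc).mono_set Ioc_subset_Icc_self
  have hconst_int : ∀ k : ℝ, IntegrableOn (fun θ : ℝ => (1 - θ) * k) (Ioc (0:ℝ) 1) volume :=
    fun k => (((continuous_const.sub continuous_id).mul
      continuous_const).continuousOn.integrableOn_Icc).mono_set Ioc_subset_Icc_self
  have hup : (∫ θ in Ioc (0:ℝ) 1, (1 - θ) * pd i (pd i ψ) (Lmap n i θ t))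
      ≤ (c + ε/2)/2 := by
    rw [← integral_onesub_const (c + ε/2)]
    refine setIntegral_mono_on hint (hconst_int _) measurableSet_Ioc ?_
    intro θ hθ
    have h1 := abs_le.mp (hQ θ hθ)
    have h2 : (0:ℝ) ≤ 1 - θ := by linarith [hθ.2]
    nlinarith [h1.2]
  have hlo : (c - ε/2)/2
      ≤ ∫ θ in Ioc (0:ℝ) 1, (1 - θ) * pd i (pd i ψ) (Lmap n i θ t) := by
    rw [← integral_onesub_const (c - ε/2)]
    refine setIntegral_mono_on (hconst_int _) hint measurableSet_Ioc ?_
    intro θ hθ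
    have h1 := abs_le.mp (hQ θ hθ)
    have h2 : (0:ℝ) ≤ 1 - θ := by linarith [hθ.2]
    nlinarith [h1.1]
  rw [hkey, Real.dist_eq, abs_lt]
  constructor <;> linarith
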